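/- For every x ≠ y in ℝ⁺, the kernel K(x,y) = (K_{(i)}(x,y))_{i≥0} with K_{(i)}(x,y) = Σ_{j∈ℤ} h^j_i(x) h^j_i(y) satisfies K_{(i)}(x,y) = δ(x,y)^{-1}[ −m_i(I(x,y)) + Σ_{j≥1} 2^{-j} m_i(I^{(j)}(x,y)) ], where m_i(I^j_k) = 1 if k = i and 0 otherwise, and hence |K(x,y)|_{ℓ²} ≤ 2/δ(x,y); equivalently, Σ_{i≥0} ( Σ_{j∈ℤ} h^j_i(x) h^j_i(y) )² ≤ 4/δ(x,y)². -/
import Mathlib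


open MeasureTheory Set
open scoped ENNReal

noncomputable section

/-- The dyadic interval `I^j_k = [k 2^{-j}, (k+1) 2^{-j})` of `ℝ⁺`. -/
def dyI (j : ℤ) (k : ℕ) : Set ℝ := Set.Ico ((k : ℝ) * 2 ^ (-j)) (((k : ℝ) + 1) * 2 ^ (-j))

/-- The family `D` of dyadic intervals of `ℝ⁺`. -/
def IsDyadic (I : Set ℝ) : Prop := ∃ (j : ℤ) (k : ℕ), I = dyI j k

/-- `I(x,y)`: the smallest dyadic interval containing both `x` and `y`. -/
def dyInt (x y : ℝ) : Set ℝ := ⋂₀ {I : Set ℝ | IsDyadic I ∧ x ∈ I ∧ y ∈ I}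

/-- The dyadic distance `δ(x,y) = |I(x,y)|`, with `δ(x,x) = 0`. -/
def dyDist (x y : ℝ) : ℝ := if x = y then 0 else (volume (dyInt x y)).toReal

/-- The `l`-th dyadic ancestor of a dyadic interval: the unique dyadic interval
containing it whose measure is `2^l` times larger. -/
def dyAncestor (l : ℕ) (I : Set ℝ) : Set ℝ :=
  ⋂₀ {J : Set ℝ | IsDyadic J ∧ I ⊆ J ∧ volume J = 2 ^ l * volume I}

/-- The butterfly of the interval `[a, b)`:
`B = (I⁺ × I⁻) ∪ (I⁻ × I⁺)` where `I⁻, I⁺` are the two halves. -/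
def bflyI (a b : ℝ) : Set (ℝ × ℝ) :=
  (Set.Ico ((a + b) / 2) b ×ˢ Set.Ico a ((a + b) / 2)) ∪
    (Set.Ico a ((a + b) / 2) ×ˢ Set.Ico ((a + b) / 2) b)

/-- The butterfly `B(I^j_k)`. -/
def bfly (j : ℤ) (k : ℕ) : Set (ℝ × ℝ) := bflyI ((k : ℝ) * 2 ^ (-j)) (((k : ℝ) + 1) * 2 ^ (-j))

/-- The butterfly of an interval given as a set. -/
def bflySet (I : Set ℝ) : Set (ℝ × ℝ) := bflyI (sInf I) (sSup I)

/-- `Γ_k = ⋃_{l ∈ ℤ} B(2^l · [k, k+1))`. -/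
def Gam (k : ℕ) : Set (ℝ × ℝ) := ⋃ l : ℤ, bflyI ((k : ℝ) * 2 ^ l) (((k : ℝ) + 1) * 2 ^ l)

/-- The basic Haar wavelet `h^0_0 = 1_{[0,1/2)} - 1_{[1/2,1)}`. -/
def haar0 (x : ℝ) : ℝ :=
  Set.indicator (Set.Ico (0 : ℝ) (1 / 2)) (fun _ => 1) x
    - Set.indicator (Set.Ico (1 / 2 : ℝ) 1) (fun _ => 1) x

/-- The Haar wavelet `h^j_k(x) = 2^{j/2} h^0_0(2^j x - k)`, supported in `I^j_k`. -/
def haar (j : ℤ) (k : ℕ) (x : ℝ) : ℝ := (2 : ℝ) ^ ((j : ℝ) / 2) * haar0 (2 ^ j * x - (k : ℝ))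

/-- The finite linear span of the Haar system. -/
def HaarSpan (f : ℝ → ℝ) : Prop :=
  ∃ (F : Finset (ℤ × ℕ)) (c : ℤ × ℕ → ℝ), f = fun x => ∑ p ∈ F, c p * haar p.1 p.2 x

/-- `Ω_m(x,y) = δ(x,y) Σ_{I ∈ D} m(I) h_I(x) h_I(y)`. -/
def Omega (m : Set ℝ → ℝ) (x y : ℝ) : ℝ :=
  dyDist x y * ∑' p : ℤ × ℕ, m (dyI p.1 p.2) * (haar p.1 p.2 x * haar p.1 p.2 y)

/-- The dyadic fractional Laplacian `(-Δ)^{s/2}_{dy} f = Σ_{h ∈ H} |I(h)|^{-s} ⟨f, h⟩ h`. -/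
def dyLap (s : ℝ) (f : ℝ → ℝ) (x : ℝ) : ℝ :=
  ∑' p : ℤ × ℕ,
    (volume (dyI p.1 p.2)).toReal ^ (-s) * (∫ y, f y * haar p.1 p.2 y) * haar p.1 p.2 x

/-- The partial dyadic derivative `D^s_{(i)} f = Σ_{j ∈ ℤ} 2^{sj} ⟨f, h^j_i⟩ h^j_i`. -/
def Dsi (s : ℝ) (i : ℕ) (f : ℝ → ℝ) (x : ℝ) : ℝ :=
  ∑' j : ℤ, (2 : ℝ) ^ (s * (j : ℝ)) * (∫ y, f y * haar j i y) * haar j i x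

/-- The Haar multiplier `T_{(i)} g = Σ_{j ∈ ℤ} ⟨g, h^j_i⟩ h^j_i`. -/
def Ti (i : ℕ) (g : ℝ → ℝ) (x : ℝ) : ℝ := ∑' j : ℤ, (∫ y, g y * haar j i y) * haar j i x

/-- The directional derivative `D^s_m f = Σ_{h ∈ H} m(h) |I(h)|^{-s} ⟨f, h⟩ h`. -/
def Dsm (s : ℝ) (m : ℤ × ℕ → ℝ) (f : ℝ → ℝ) (x : ℝ) : ℝ :=
  ∑' p : ℤ × ℕ,
    m p * ((volume (dyI p.1 p.2)).toReal ^ (-s) * (∫ y, f y * haar p.1 p.2 y)) * haar p.1 p.2 x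

/-- The Haar multiplier `T_m g = Σ_{h ∈ H} m(h) ⟨g, h⟩ h`. -/
def Tm (m : ℤ × ℕ → ℝ) (g : ℝ → ℝ) (x : ℝ) : ℝ :=
  ∑' p : ℤ × ℕ, m p * (∫ y, g y * haar p.1 p.2 y) * haar p.1 p.2 x

/-- The component kernels `K_{(i)}(x,y) = Σ_{j ∈ ℤ} h^j_i(x) h^j_i(y)`. -/
def Kker (i : ℕ) (x y : ℝ) : ℝ := ∑' j : ℤ, haar j i x * haar j i y

open Classical in
/-- The multiplier `m_i` with `m_i(I^j_k) = 1` if `k = i` and `0` otherwise. -/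
def mInd (i : ℕ) (I : Set ℝ) : ℝ := if ∃ j : ℤ, I = dyI j i then 1 else 0

/-- The dyadic energy form `E^δ_s(f)`. -/
def dyEnergy (s : ℝ) (f : ℝ → ℝ) : ℝ :=
  ∫ x in Set.Ici (0 : ℝ), ∫ y in Set.Ici (0 : ℝ), (f x - f y) ^ 2 * dyDist x y ^ (-(1 + 2 * s))

lemma two_zpow_pos (j : ℤ) : (0:ℝ) < 2 ^ j := zpow_pos two_pos j

lemma mem_dyI_iff {x : ℝ} {j : ℤ} {k : ℕ} :
    x ∈ dyI j k ↔ ⌊(2:ℝ) ^ j * x⌋ = (k:ℤ) := by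
  have hc : (0:ℝ) < (2:ℝ) ^ j := two_zpow_pos j
  rw [dyI, mem_Ico, Int.floor_eq_iff, zpow_neg, mul_inv_le_iff₀' hc, lt_mul_inv_iff₀' hc]
  push_cast
  tauto

lemma floor_half (a : ℝ) : ⌊a / 2⌋ = ⌊a⌋ / 2 := by
  have h1 : (⌊a⌋ : ℝ) ≤ a := Int.floor_le a
  have h2 : a < ⌊a⌋ + 1 := Int.lt_floor_add_one a
  have hq : 2 * (⌊a⌋ / 2) + ⌊a⌋ % 2 = ⌊a⌋ := Int.mul_ediv_add_emod ⌊a⌋ 2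
  have hr0 : 0 ≤ ⌊a⌋ % 2 := Int.emod_nonneg _ (by norm_num)
  have hr1 : ⌊a⌋ % 2 ≤ 1 := by omega
  have hqR : ((2 * (⌊a⌋ / 2) + ⌊a⌋ % 2 : ℤ) : ℝ) = ((⌊a⌋ : ℤ) : ℝ) := by exact_mod_cast hq
  push_cast at hqR
  have hr0R : (0:ℝ) ≤ ((⌊a⌋ % 2 : ℤ) : ℝ) := by exact_mod_cast hr0
  have hr1R : (((⌊a⌋ % 2 : ℤ)) : ℝ) ≤ 1 := by exact_mod_cast hr1
  rw [Int.floor_eq_iff]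
  constructor
  · linarith
  · linarith

lemma floor_zpow_mono {x y : ℝ} {j j' : ℤ} (h : j' ≤ j)
    (hf : ⌊(2:ℝ) ^ j * x⌋ = ⌊(2:ℝ) ^ j * y⌋) :
    ⌊(2:ℝ) ^ j' * x⌋ = ⌊(2:ℝ) ^ j' * y⌋ := by
  obtain ⟨n, rfl⟩ : ∃ n : ℕ, j' = j - n := ⟨(j - j').toNat, by omega⟩
  clear h
  induction n with
  | zero => simpa using hf
  | succ n ih =>
    have e : ∀ z : ℝ, (2:ℝ) ^ (j - ((n:ℤ)+1)) * z = ((2:ℝ) ^ (j - (n:ℤ)) * z) / 2 := by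
      intro z
      rw [show j - ((n:ℤ)+1) = (j - (n:ℤ)) - 1 by ring, zpow_sub₀ (two_ne_zero)]
      ring
    push_cast
    rw [e, e, floor_half, floor_half]
    push_cast at ih
    rw [ih]

lemma dyI_subset {x : ℝ} {j j' : ℤ} {k k' : ℕ} (h : j' ≤ j)
    (hx1 : x ∈ dyI j k) (hx2 : x ∈ dyI j' k') : dyI j k ⊆ dyI j' k' := by
  intro z hz
  rw [mem_dyI_iff] at hx1 hx2 hz ⊢
  rw [← hx2]
  exact floor_zpow_mono h (hz.trans hx1.symm)

lemma volume_dyI (j : ℤ) (k : ℕ) : volume (dyI j k) = ENNReal.ofReal ((2:ℝ) ^ (-j)) := by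
  rw [dyI, Real.volume_Ico]
  congr 1
  ring

lemma two_zpow_inj {a b : ℤ} (h : (2:ℝ) ^ a = (2:ℝ) ^ b) : a = b :=
  zpow_right_injective₀ (by norm_num) (by norm_num) h

lemma dyI_inj {j j' : ℤ} {k k' : ℕ} (h : dyI j k = dyI j' k') : j = j' ∧ k = k' := by
  have hc : (0:ℝ) < (2:ℝ) ^ (-j) := two_zpow_pos _
  have hc' : (0:ℝ) < (2:ℝ) ^ (-j') := two_zpow_pos _
  rw [dyI, dyI, Ico_eq_Ico_iff (by left; nlinarith)] at h
  obtain ⟨h1, h2⟩ := h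
  have hj : (2:ℝ) ^ (-j) = 2 ^ (-j') := by nlinarith
  have hjj : j = j' := by have := two_zpow_inj hj; omega
  subst hjj
  refine ⟨rfl, ?_⟩
  have : (k:ℝ) = k' := by
    rw [hj] at h1
    exact mul_right_cancel₀ (ne_of_gt hc') h1
  exact_mod_cast this

lemma mInd_dyI (i : ℕ) (j : ℤ) (k : ℕ) : mInd i (dyI j k) = if k = i then 1 else 0 := by
  unfold mInd
  by_cases h : k = i
  · subst h; rw [if_pos ⟨j, rfl⟩, if_pos rfl]
  · rw [if_neg, if_neg h]
    rintro ⟨j', hj⟩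
    exact h (dyI_inj hj).2

lemma rpow_half_sq (j : ℤ) : (2:ℝ) ^ ((j:ℝ)/2) * (2:ℝ) ^ ((j:ℝ)/2) = (2:ℝ) ^ j := by
  rw [← Real.rpow_add two_pos]
  rw [show (j:ℝ)/2 + (j:ℝ)/2 = (j:ℝ) by ring]
  rw [Real.rpow_intCast]

lemma haar_of_floor_ne {x : ℝ} {j : ℤ} {i : ℕ} (h : ⌊(2:ℝ) ^ j * x⌋ ≠ (i:ℤ)) :
    haar j i x = 0 := by
  have h' : (2:ℝ) ^ j * x < i ∨ (i:ℝ) + 1 ≤ (2:ℝ) ^ j * x := by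
    by_contra hc
    push_neg at hc
    exact h (Int.floor_eq_iff.2 ⟨by exact_mod_cast hc.1, by push_cast; linarith [hc.2]⟩)
  have hA : (2:ℝ) ^ j * x - i ∉ Ico (0:ℝ) (1/2) := by
    rw [mem_Ico]; push_neg; intro h1; rcases h' with h'|h' <;> linarith
  have hB : (2:ℝ) ^ j * x - i ∉ Ico (1/2 : ℝ) 1 := by
    rw [mem_Ico]; push_neg; intro h1; rcases h' with h'|h' <;> linarith
  have : haar0 ((2:ℝ) ^ j * x - i) = 0 := by
    unfold haar0
    rw [indicator_of_notMem hA, indicator_of_notMem hB]; norm_num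
  rw [haar, this, mul_zero]

lemma floor_double {x : ℝ} {j : ℤ} {m : ℤ} (h : ⌊(2:ℝ) ^ j * x⌋ = m) :
    ⌊(2:ℝ) ^ (j+1) * x⌋ = 2*m ∨ ⌊(2:ℝ) ^ (j+1) * x⌋ = 2*m + 1 := by
  have h1 : (m:ℝ) ≤ (2:ℝ) ^ j * x := h ▸ Int.floor_le _
  have h2 : (2:ℝ) ^ j * x < m + 1 := by rw [← h]; exact Int.lt_floor_add_one _
  have he : (2:ℝ) ^ (j+1) * x = 2 * ((2:ℝ) ^ j * x) := by
    rw [zpow_add_one₀ two_ne_zero]; ring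
  have hl : (2*m : ℤ) ≤ ⌊(2:ℝ) ^ (j+1) * x⌋ := by
    rw [Int.le_floor]; rw [he]; push_cast; linarith
  have hu : ⌊(2:ℝ) ^ (j+1) * x⌋ < 2*m + 2 := by
    rw [Int.floor_lt]; rw [he]; push_cast; linarith
  omega

lemma haar_first {x : ℝ} {j : ℤ} {i : ℕ} (h : ⌊(2:ℝ) ^ (j+1) * x⌋ = 2*(i:ℤ)) :
    haar j i x = (2:ℝ) ^ ((j:ℝ)/2) := by
  have h1 : ((2*(i:ℤ) : ℤ):ℝ) ≤ (2:ℝ) ^ (j+1) * x := h ▸ Int.floor_le _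
  have h2 : (2:ℝ) ^ (j+1) * x < (2*(i:ℤ) : ℤ) + 1 := by rw [← h]; exact Int.lt_floor_add_one _
  push_cast at h1 h2
  have he : (2:ℝ) ^ (j+1) * x = 2 * ((2:ℝ) ^ j * x) := by
    rw [zpow_add_one₀ two_ne_zero]; ring
  rw [he] at h1 h2
  have : haar0 ((2:ℝ) ^ j * x - i) = 1 := by
    unfold haar0
    rw [indicator_of_mem (by rw [mem_Ico]; constructor <;> [linarith; linarith]),
        indicator_of_notMem (by rw [mem_Ico]; push_neg; intro hh; linarith)]
    norm_num
  rw [haar, this, mul_one]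

lemma haar_second {x : ℝ} {j : ℤ} {i : ℕ} (h : ⌊(2:ℝ) ^ (j+1) * x⌋ = 2*(i:ℤ) + 1) :
    haar j i x = -((2:ℝ) ^ ((j:ℝ)/2)) := by
  have h1 : ((2*(i:ℤ)+1 : ℤ):ℝ) ≤ (2:ℝ) ^ (j+1) * x := h ▸ Int.floor_le _
  have h2 : (2:ℝ) ^ (j+1) * x < (2*(i:ℤ)+1 : ℤ) + 1 := by rw [← h]; exact Int.lt_floor_add_one _
  push_cast at h1 h2
  have he : (2:ℝ) ^ (j+1) * x = 2 * ((2:ℝ) ^ j * x) := by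
    rw [zpow_add_one₀ two_ne_zero]; ring
  rw [he] at h1 h2
  have : haar0 ((2:ℝ) ^ j * x - i) = -1 := by
    unfold haar0
    rw [indicator_of_notMem (by rw [mem_Ico]; push_neg; intro hh; linarith),
        indicator_of_mem (by rw [mem_Ico]; constructor <;> [linarith; linarith])]
    norm_num
  rw [haar, this]
  ring


lemma zpow_sub_nat (j0 : ℤ) (m : ℕ) : (2:ℝ) ^ (j0 - (m:ℤ)) = (2:ℝ) ^ j0 * (1/2) ^ m := by
  rw [zpow_sub₀ (two_ne_zero : (2:ℝ) ≠ 0), div_eq_mul_inv]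
  congr 1
  rw [one_div, inv_pow, ← zpow_natCast (2:ℝ) m]

lemma vol_helper (l : ℕ) (j : ℤ) :
    (2:ℝ≥0∞) ^ l * ENNReal.ofReal ((2:ℝ) ^ (-j)) = ENNReal.ofReal ((2:ℝ) ^ ((l:ℤ) - j)) := by
  have h2 : (2:ℝ≥0∞) = ENNReal.ofReal 2 := by norm_num
  rw [h2, ← ENNReal.ofReal_pow (by norm_num), ← ENNReal.ofReal_mul (by positivity)]
  congr 1
  rw [← zpow_natCast (2:ℝ) l, ← zpow_add₀ (two_ne_zero : (2:ℝ) ≠ 0)]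
  congr 1

/-- formula and `ℓ²` size estimate for the vector valued kernel
`K = (K_{(i)})_{i ≥ 0}`, `K_{(i)}(x,y) = Σ_j h^j_i(x) h^j_i(y)`. -/
theorem kernel_formula_and_l2_bound (x y : ℝ) (hx : 0 ≤ x) (hy : 0 ≤ y) (hxy : x ≠ y) :
    (∀ i : ℕ, Kker i x y =
      (dyDist x y)⁻¹ *
        (-(mInd i (dyInt x y)) +
          ∑' j : ℕ, (2 : ℝ) ^ (-((j : ℤ) + 1)) * mInd i (dyAncestor (j + 1) (dyInt x y)))) ∧
    ∑' i : ℕ, (Kker i x y) ^ 2 ≤ 4 / (dyDist x y) ^ 2 := by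
  classical
  have hd : 0 < |x - y| := abs_pos.2 (sub_ne_zero.2 hxy)
  have Hbdd : ∃ b : ℤ, ∀ z : ℤ, (⌊(2:ℝ) ^ z * x⌋ = ⌊(2:ℝ) ^ z * y⌋) → z ≤ b := by
    obtain ⟨n, hn⟩ := pow_unbounded_of_one_lt (|x - y|)⁻¹ (one_lt_two (α := ℝ))
    refine ⟨n, fun z hz => ?_⟩
    by_contra hc
    push_neg at hc
    have hzn : (2:ℝ) ^ ((n:ℤ)) ≤ (2:ℝ) ^ z := zpow_le_zpow_right₀ one_le_two (by omega)
    have h1 : (1:ℝ) < 2 ^ ((n:ℤ)) * |x - y| := by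
      rw [zpow_natCast]
      calc (1:ℝ) = |x - y|⁻¹ * |x - y| := (inv_mul_cancel₀ hd.ne').symm
      _ < 2 ^ n * |x - y| := mul_lt_mul_of_pos_right hn hd
    have h2 : (1:ℝ) < 2 ^ z * |x - y| :=
      lt_of_lt_of_le h1 (mul_le_mul_of_nonneg_right hzn (abs_nonneg _))
    have h3 : |(2:ℝ) ^ z * x - 2 ^ z * y| < 1 := by
      have hfx := Int.floor_le ((2:ℝ) ^ z * x)
      have hfy := Int.floor_le ((2:ℝ) ^ z * y)
      have hfx' := Int.lt_floor_add_one ((2:ℝ) ^ z * x)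
      have hfy' := Int.lt_floor_add_one ((2:ℝ) ^ z * y)
      rw [hz] at hfx hfx'
      rw [abs_lt]
      constructor <;> linarith
    rw [← mul_sub, abs_mul, abs_of_pos (two_zpow_pos z)] at h3
    linarith
  have Hinh : ∃ z : ℤ, ⌊(2:ℝ) ^ z * x⌋ = ⌊(2:ℝ) ^ z * y⌋ := by
    obtain ⟨m, hm⟩ := pow_unbounded_of_one_lt (max x y) (one_lt_two (α := ℝ))
    have hfl : ∀ z : ℝ, 0 ≤ z → z ≤ max x y → ⌊(2:ℝ) ^ (-(m:ℤ)) * z⌋ = 0 := by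
      intro z hz0 hzm
      rw [Int.floor_eq_zero_iff, mem_Ico]
      have h2m : (0:ℝ) < 2 ^ m := by positivity
      refine ⟨by positivity, ?_⟩
      rw [zpow_neg, zpow_natCast, mul_comm, ← div_eq_mul_inv, div_lt_one h2m]
      linarith
    exact ⟨-(m:ℤ), (hfl x hx (le_max_left x y)).trans (hfl y hy (le_max_right x y)).symm⟩
  obtain ⟨j0, hj0, hmax⟩ := Int.exists_greatest_of_bdd Hbdd Hinh
  have hA : ∀ j : ℤ, j ≤ j0 → ⌊(2:ℝ) ^ j * x⌋ = ⌊(2:ℝ) ^ j * y⌋ := fun j hj =>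
    floor_zpow_mono hj hj0
  have hdiff : ∀ j : ℤ, j0 < j → ⌊(2:ℝ) ^ j * x⌋ ≠ ⌊(2:ℝ) ^ j * y⌋ := fun j hj h =>
    absurd (hmax j h) (not_le.2 hj)
  have hne1 : ⌊(2:ℝ) ^ (j0+1) * x⌋ ≠ ⌊(2:ℝ) ^ (j0+1) * y⌋ := hdiff _ (by omega)
  set K : ℕ → ℕ := fun l => (⌊(2:ℝ) ^ (j0 - (l:ℤ)) * x⌋).toNat with hKdef
  have hK : ∀ l : ℕ, ((K l : ℤ)) = ⌊(2:ℝ) ^ (j0 - (l:ℤ)) * x⌋ := by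
    intro l
    apply Int.toNat_of_nonneg
    apply Int.floor_nonneg.2
    positivity
  have hKy : ∀ l : ℕ, ((K l : ℤ)) = ⌊(2:ℝ) ^ (j0 - (l:ℤ)) * y⌋ := fun l =>
    (hK l).trans (hA _ (by omega))
  have hxmem : ∀ l : ℕ, x ∈ dyI (j0 - (l:ℤ)) (K l) := fun l => mem_dyI_iff.2 (hK l).symm
  have hymem : ∀ l : ℕ, y ∈ dyI (j0 - (l:ℤ)) (K l) := fun l => mem_dyI_iff.2 (hKy l).symm
  have e0 : j0 - ((0:ℕ):ℤ) = j0 := by simp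
  have hx0 : x ∈ dyI j0 (K 0) := by have := hxmem 0; rwa [e0] at this
  have hy0 : y ∈ dyI j0 (K 0) := by have := hymem 0; rwa [e0] at this
  have hK0 : ((K 0 : ℤ)) = ⌊(2:ℝ) ^ j0 * x⌋ := by have := hK 0; rwa [e0] at this
  have hK0y : ((K 0 : ℤ)) = ⌊(2:ℝ) ^ j0 * y⌋ := by have := hKy 0; rwa [e0] at this
  have hInt : dyInt x y = dyI j0 (K 0) := by
    apply subset_antisymm
    · exact sInter_subset_of_mem ⟨⟨j0, K 0, rfl⟩, hx0, hy0⟩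
    · intro z hz
      simp only [dyInt, mem_sInter]
      intro I hI
      obtain ⟨⟨j, k, rfl⟩, hxI, hyI⟩ := hI
      have hj : j ≤ j0 := by
        by_contra hcon
        exact hdiff j (by omega) ((mem_dyI_iff.1 hxI).trans (mem_dyI_iff.1 hyI).symm)
      exact dyI_subset hj hx0 hxI hz
  have hdist : dyDist x y = (2:ℝ) ^ (-j0) := by
    rw [dyDist, if_neg hxy, hInt, volume_dyI, ENNReal.toReal_ofReal (two_zpow_pos _).le]
  have hdistinv : (dyDist x y)⁻¹ = (2:ℝ) ^ j0 := by
    rw [hdist, ← zpow_neg, neg_neg]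
  have hAnc : ∀ l : ℕ, dyAncestor l (dyInt x y) = dyI (j0 - (l:ℤ)) (K l) := by
    intro l
    rw [hInt]
    have hset : {J : Set ℝ | IsDyadic J ∧ dyI j0 (K 0) ⊆ J ∧
        volume J = 2 ^ l * volume (dyI j0 (K 0))} = {dyI (j0 - (l:ℤ)) (K l)} := by
      ext J
      simp only [mem_setOf_eq, mem_singleton_iff]
      constructor
      · rintro ⟨⟨j, k, rfl⟩, hsub, hvolJ⟩
        rw [volume_dyI, volume_dyI, vol_helper] at hvolJ
        have hj : j = j0 - (l:ℤ) := by
          have h1 := (ENNReal.ofReal_eq_ofReal_iff (two_zpow_pos _).le (two_zpow_pos _).le).1 hvolJ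
          have h2 := two_zpow_inj h1
          omega
        subst hj
        have hxJ : x ∈ dyI (j0 - (l:ℤ)) k := hsub hx0
        have hkl : (k:ℤ) = ((K l : ℤ)) := (mem_dyI_iff.1 hxJ).symm.trans (hK l).symm
        have hk : k = K l := by exact_mod_cast hkl
        rw [hk]
      · rintro rfl
        refine ⟨⟨_, _, rfl⟩, dyI_subset (by omega) hx0 (hxmem l), ?_⟩
        rw [volume_dyI, volume_dyI, vol_helper]
        congr 2
        ring
    rw [dyAncestor, hset, sInter_singleton]
  set E : ℕ → ℝ := fun i => if K 0 = i then (1:ℝ) else 0 with hE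
  set T : ℕ → ℝ := fun i =>
    ∑' l : ℕ, (2:ℝ) ^ (-((l:ℤ)+1)) * (if K (l+1) = i then (1:ℝ) else 0) with hT
  have key : ∀ i : ℕ, Kker i x y = (2:ℝ) ^ j0 * (-(E i) + T i) := by
    intro i
    simp only [hE, hT]
    set g : ℤ → ℝ := fun j => haar j i x * haar j i y with hgdef
    have hg0 : g j0 = (if K 0 = i then -((2:ℝ) ^ j0) else 0) := by
      by_cases hi : K 0 = i
      · rw [if_pos hi]
        have hfx : ⌊(2:ℝ) ^ j0 * x⌋ = (i:ℤ) := by rw [← hK0, hi]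
        have hfy : ⌊(2:ℝ) ^ j0 * y⌋ = (i:ℤ) := by rw [← hK0y, hi]
        show haar j0 i x * haar j0 i y = _
        rcases floor_double hfx with hx1 | hx1 <;> rcases floor_double hfy with hy1 | hy1
        · exact absurd (hx1.trans hy1.symm) hne1
        · rw [haar_first hx1, haar_second hy1, mul_neg, rpow_half_sq]
        · rw [haar_second hx1, haar_first hy1, neg_mul, rpow_half_sq]
        · exact absurd (hx1.trans hy1.symm) hne1
      · rw [if_neg hi]
        have hne : ⌊(2:ℝ) ^ j0 * x⌋ ≠ (i:ℤ) := by rw [← hK0]; exact_mod_cast hi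
        show haar j0 i x * haar j0 i y = 0
        rw [haar_of_floor_ne hne, zero_mul]
    have hgpos : ∀ l : ℕ, g (j0 - ((l:ℤ) + 1)) =
        (if K (l+1) = i then (2:ℝ) ^ (j0 - ((l:ℤ)+1)) else 0) := by
      intro l
      have hcast : j0 - ((l:ℤ)+1) = j0 - ((l+1 : ℕ):ℤ) := by push_cast; ring
      have hKl : ((K (l+1) : ℤ)) = ⌊(2:ℝ) ^ (j0 - ((l:ℤ)+1)) * x⌋ := by
        rw [hcast]; exact hK (l+1)
      have hKly : ((K (l+1) : ℤ)) = ⌊(2:ℝ) ^ (j0 - ((l:ℤ)+1)) * y⌋ := by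
        rw [hcast]; exact hKy (l+1)
      by_cases hi : K (l+1) = i
      · rw [if_pos hi]
        have hfx : ⌊(2:ℝ) ^ (j0 - ((l:ℤ)+1)) * x⌋ = (i:ℤ) := by rw [← hKl, hi]
        have hfy : ⌊(2:ℝ) ^ (j0 - ((l:ℤ)+1)) * y⌋ = (i:ℤ) := by rw [← hKly, hi]
        have heq1 : ⌊(2:ℝ) ^ ((j0 - ((l:ℤ)+1)) + 1) * x⌋ = ⌊(2:ℝ) ^ ((j0 - ((l:ℤ)+1)) + 1) * y⌋ :=
          hA _ (by omega)
        show haar _ i x * haar _ i y = _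
        rcases floor_double hfx with h1 | h1
        · rw [haar_first h1, haar_first (heq1.symm.trans h1), rpow_half_sq]
        · rw [haar_second h1, haar_second (heq1.symm.trans h1), neg_mul_neg, rpow_half_sq]
      · rw [if_neg hi]
        have hne : ⌊(2:ℝ) ^ (j0 - ((l:ℤ)+1)) * x⌋ ≠ (i:ℤ) := by rw [← hKl]; exact_mod_cast hi
        show haar _ i x * haar _ i y = 0
        rw [haar_of_floor_ne hne, zero_mul]
    have hgz : ∀ j : ℤ, j0 < j → g j = 0 := by
      intro j hj
      by_cases hfx : ⌊(2:ℝ) ^ j * x⌋ = (i:ℤ)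
      · have hny : ⌊(2:ℝ) ^ j * y⌋ ≠ (i:ℤ) := fun h => hdiff j hj (hfx.trans h.symm)
        show haar j i x * haar j i y = 0
        rw [haar_of_floor_ne hny, mul_zero]
      · show haar j i x * haar j i y = 0
        rw [haar_of_floor_ne hfx, zero_mul]
    have habs : ∀ l : ℕ, |g (j0 - (l:ℤ))| ≤ (2:ℝ) ^ j0 * (1/2) ^ l := by
      intro l
      cases l with
      | zero =>
        rw [e0, hg0, pow_zero, mul_one]
        split
        · rw [abs_neg, abs_of_pos (two_zpow_pos _)]
        · simp [(two_zpow_pos j0).le]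
      | succ n =>
        rw [show (j0 - ((n+1:ℕ):ℤ)) = j0 - ((n:ℤ)+1) by push_cast; ring, hgpos n]
        split
        · rw [abs_of_pos (two_zpow_pos _),
            show j0 - ((n:ℤ)+1) = j0 - ((n+1:ℕ):ℤ) by push_cast; ring, zpow_sub_nat]
        · rw [abs_zero]; positivity
    have hsum1 : Summable fun l : ℕ => g (j0 - (l:ℤ)) := by
      rw [← summable_abs_iff]
      exact Summable.of_nonneg_of_le (fun l => abs_nonneg _) habs
        (summable_geometric_two.mul_left _)
    have h1 : Kker i x y = ∑' l : ℕ, g (j0 - (l:ℤ)) := by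
      have hinj : Function.Injective (fun l : ℕ => j0 - (l:ℤ)) := by
        intro a b h
        simp only at h
        omega
      have hsupp : Function.support g ⊆ Set.range (fun l : ℕ => j0 - (l:ℤ)) := by
        intro j hj
        have hjle : j ≤ j0 := by
          by_contra hcon
          exact hj (hgz j (by omega))
        exact ⟨(j0 - j).toNat, by simp only; omega⟩
      exact (hinj.tsum_eq hsupp).symm
    have h2 : ∑' l : ℕ, g (j0 - (l:ℤ)) = g (j0 - ((0:ℕ):ℤ)) + ∑' l : ℕ, g (j0 - ((l+1:ℕ):ℤ)) :=
      Summable.tsum_eq_zero_add hsum1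
    rw [h1, h2, e0, hg0]
    have h3 : ∀ l : ℕ, g (j0 - ((l+1:ℕ):ℤ)) =
        (2:ℝ) ^ j0 * ((2:ℝ) ^ (-((l:ℤ)+1)) * (if K (l+1) = i then (1:ℝ) else 0)) := by
      intro l
      rw [show (j0 - ((l+1:ℕ):ℤ)) = j0 - ((l:ℤ)+1) by push_cast; ring, hgpos l]
      split
      · rw [mul_one, ← zpow_add₀ (two_ne_zero : (2:ℝ) ≠ 0), sub_eq_add_neg]
      · rw [mul_zero, mul_zero]
    rw [tsum_congr h3, tsum_mul_left]
    split <;> ring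
  have hwsum : Summable fun l : ℕ => (2:ℝ) ^ (-((l:ℤ)+1)) := by
    have hw : ∀ l : ℕ, (1/2 : ℝ) * (1/2)^l = (2:ℝ) ^ (-((l:ℤ)+1)) := by
      intro l
      rw [show -((l:ℤ)+1) = (0:ℤ) - ((l+1:ℕ):ℤ) by push_cast; ring, zpow_sub_nat, zpow_zero,
        one_mul, pow_succ]
      ring
    exact Summable.congr ((summable_geometric_two).mul_left (1/2)) hw
  have hwtot : (∑' l : ℕ, (2:ℝ) ^ (-((l:ℤ)+1))) = 1 := by
    have hw : ∀ l : ℕ, (2:ℝ) ^ (-((l:ℤ)+1)) = (1/2 : ℝ) * (1/2)^l := by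
      intro l
      rw [show -((l:ℤ)+1) = (0:ℤ) - ((l+1:ℕ):ℤ) by push_cast; ring, zpow_sub_nat, zpow_zero,
        one_mul, pow_succ]
      ring
    rw [tsum_congr hw, tsum_mul_left, tsum_geometric_two]
    norm_num
  have htsummand : ∀ i : ℕ,
      Summable fun l : ℕ => (2:ℝ) ^ (-((l:ℤ)+1)) * (if K (l+1) = i then (1:ℝ) else 0) := by
    intro i
    apply Summable.of_nonneg_of_le _ _ hwsum
    · intro l
      split <;> positivity
    · intro l
      by_cases h : K (l+1) = i
      · rw [if_pos h, mul_one]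
      · rw [if_neg h, mul_zero]
        positivity
  have ht_nonneg : ∀ i, 0 ≤ T i := by
    intro i
    simp only [hT]
    apply tsum_nonneg
    intro l
    split <;> positivity
  have ht_le : ∀ i, T i ≤ 1 := by
    intro i
    simp only [hT]
    refine le_trans (Summable.tsum_le_tsum ?_ (htsummand i) hwsum) (le_of_eq hwtot)
    intro l
    by_cases h : K (l+1) = i
    · rw [if_pos h, mul_one]
    · rw [if_neg h, mul_zero]
      positivity
  have he_nonneg : ∀ i, 0 ≤ E i := by
    intro i
    simp only [hE]
    split <;> norm_num
  have he_le : ∀ i, E i ≤ 1 := by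
    intro i
    simp only [hE]
    split <;> norm_num
  constructor
  · intro i
    have hmtsum : (∑' j : ℕ, (2:ℝ) ^ (-((j:ℤ)+1)) * mInd i (dyAncestor (j+1) (dyInt x y))) = T i := by
      simp only [hT]
      exact tsum_congr fun j => by rw [hAnc (j+1), mInd_dyI]
    have hm0 : mInd i (dyInt x y) = E i := by
      simp only [hE]
      rw [hInt, mInd_dyI]
    rw [key i, hdistinv, hmtsum, hm0]
  · have hc_sq : ∀ i, (Kker i x y)^2 ≤ ((2:ℝ)^j0)^2 * (2 * (E i + T i)) := by
      intro i
      rw [key i]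
      have habs2 : |(-(E i) + T i)| ≤ E i + T i := by
        rw [abs_le]
        constructor <;> [linarith [he_nonneg i, ht_nonneg i]; linarith [he_nonneg i, ht_nonneg i]]
      have h2le : E i + T i ≤ 2 := by linarith [he_le i, ht_le i]
      have hsq : (-(E i) + T i)^2 ≤ 2 * (E i + T i) := by
        nlinarith [sq_abs (-(E i) + T i), he_nonneg i, ht_nonneg i]
      calc ((2:ℝ)^j0 * (-(E i) + T i))^2 = ((2:ℝ)^j0)^2 * (-(E i)+T i)^2 := by ring
      _ ≤ ((2:ℝ)^j0)^2 * (2*(E i + T i)) := by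
        apply mul_le_mul_of_nonneg_left hsq (sq_nonneg _)
    have hgoalRHS : (4:ℝ) / (dyDist x y)^2 = ((2:ℝ)^j0)^2 * 4 := by
      rw [hdist, zpow_neg, inv_pow, div_eq_mul_inv, inv_inv]
      ring
    rw [hgoalRHS]
    apply tsum_le_of_sum_le' (by positivity)
    intro s
    have hEsum : ∑ i ∈ s, E i ≤ 1 := by
      simp only [hE]
      rw [Finset.sum_ite_eq]
      split <;> norm_num
    have hTsum : ∑ i ∈ s, T i ≤ 1 := by
      simp only [hT]
      rw [← Summable.tsum_finsetSum (fun i _ => htsummand i)]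
      refine le_trans (Summable.tsum_le_tsum ?_ (summable_sum (fun i _ => htsummand i)) hwsum)
        (le_of_eq hwtot)
      intro l
      rw [← Finset.mul_sum]
      have hle1 : ∑ i ∈ s, (if K (l+1) = i then (1:ℝ) else 0) ≤ 1 := by
        rw [Finset.sum_ite_eq]
        split <;> norm_num
      exact mul_le_of_le_one_right (two_zpow_pos _).le hle1
    calc ∑ i ∈ s, (Kker i x y)^2 ≤ ∑ i ∈ s, ((2:ℝ)^j0)^2 * (2*(E i + T i)) :=
        Finset.sum_le_sum (fun i _ => hc_sq i)
    _ = ((2:ℝ)^j0)^2 * (2 * (∑ i ∈ s, E i + ∑ i ∈ s, T i)) := by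
        rw [← Finset.mul_sum]
        congr 1
        rw [← Finset.mul_sum, Finset.sum_add_distrib]
    _ ≤ ((2:ℝ)^j0)^2 * (2 * (1 + 1)) := by
        apply mul_le_mul_of_nonneg_left _ (sq_nonneg _)
        apply mul_le_mul_of_nonneg_left _ (by norm_num)
        exact add_le_add hEsum hTsum
    _ = ((2:ℝ)^j0)^2 * 4 := by ring
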